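/- arXiv:1711.02545 — 5 statements merged into one kernel-verified Lean document; each statement's English description precedes it below -/
import Mathlib

section
/- For any interval of natural numbers I = [I1..I2] ⊆ ℕ (with I1 ≥ 1), I can be partitioned into two finite sequences of pairwise disjoint and consecutive intervals {J^(−a), J^(−a+1), ..., J^(0)} and {J^(1), ..., J^(b)} such that every J^(i) belongs to the geometric covering 𝒥 and J^(i) ⊆ I, the lengths satisfy |J^(−i)|/|J^(−i+1)| ≤ 1/2 for i = 1,...,a, and |J^(i+1)|/|J^(i)| ≤ 1/2 for i = 1,...,b−1; i.e., the interval lengths successively (at least) double and then successively (at least) halve. -/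
/-! Write `[I1..I2]` as the half-open `[x, y)` with `x = I1`, `y = I2 + 1`, and pick `m ∈ (x, y]`
with `2 ^ K ∣ m`, `m - x ≤ 2 ^ K` and `y - m < 2 ^ K` (the point of largest 2-adic valuation).
The binary digits of `m - x`, lowest first, cut `[x, m)` into blocks of increasing size, and those
of `y - m`, highest first, cut `[m, y)` into blocks of decreasing size. Every block starts at a
multiple of its size because `2 ^ K ∣ m`, and distinct binary digits make consecutive sizes at
least double, resp. halve. No condition links `J^(0)` and `J^(1)`, so the two halves need not be
compared where they meet. -/

/-- An interval `[s..e]` of natural numbers belongs to the geometric covering `𝒥`: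
it has the form `[m·2^k .. (m+1)·2^k − 1]` for some `k ≥ 0` and `m ≥ 1`. -/
def IsGCInterval (s e : ℕ) : Prop :=
  ∃ k m : ℕ, 1 ≤ m ∧ s = m * 2 ^ k ∧ e + 1 = (m + 1) * 2 ^ k

lemma IsGCInterval.le {s e : ℕ} (h : IsGCInterval s e) : s ≤ e := by
  obtain ⟨k, m, -, rfl, he⟩ := h
  have : 1 ≤ 2 ^ k := Nat.one_le_two_pow
  nlinarith

lemma isGCInterval_of_two_pow_dvd {s e k : ℕ} (hs : 0 < s) (hk : 2 ^ k ∣ s)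
    (he : e + 1 = s + 2 ^ k) : IsGCInterval s e := by
  obtain ⟨m, rfl⟩ := hk
  exact ⟨k, m, Nat.pos_of_mul_pos_left hs, mul_comm _ _, by rw [he]; ring⟩

lemma exists_two_pow_dvd_split {x y : ℕ} (hxy : x < y) :
    ∃ K m : ℕ, x < m ∧ m ≤ y ∧ 2 ^ K ∣ m ∧ m ≤ x + 2 ^ K ∧ y < m + 2 ^ K := by
  induction y using Nat.strong_induction_on generalizing x with
  | _ y ih =>
  by_cases hhalf : x / 2 < y / 2
  · obtain ⟨K, m, hxm, hmy, hK, hmx, hym⟩ := ih (y / 2) (by omega) hhalf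
    refine ⟨K + 1, 2 * m, by omega, by omega, ?_, ?_, ?_⟩ <;> rw [pow_succ']
    · exact mul_dvd_mul_left 2 hK
    · omega
    · omega
  · exact ⟨0, y, hxy, le_rfl, one_dvd y, by omega, by omega⟩

lemma two_pow_succ_padicValNat_dvd_sub (d : ℕ) :
    2 ^ (padicValNat 2 d + 1) ∣ d - 2 ^ padicValNat 2 d := by
  rcases eq_or_ne d 0 with rfl | hd
  · simp
  have hnot := pow_succ_padicValNat_not_dvd (p := 2) hd
  obtain ⟨u, hu⟩ := pow_padicValNat_dvd (p := 2) (n := d)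
  set v := padicValNat 2 d
  have hu_odd : ¬ 2 ∣ u := by
    rintro ⟨w, rfl⟩
    exact hnot ⟨w, by rw [hu, pow_succ]; ring⟩
  obtain ⟨w, hw⟩ : 2 ∣ u - 1 := by omega
  exact ⟨w, by rw [hu, pow_succ, mul_assoc, ← hw, Nat.mul_sub_one]⟩

lemma two_pow_le_two_pow_padicValNat {d j : ℕ} (hd : d ≠ 0) (h : 2 ^ j ∣ d) :
    2 ^ j ≤ 2 ^ padicValNat 2 d :=
  Nat.pow_le_pow_right two_pos ((padicValNat_dvd_iff_le hd).1 h)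

lemma two_pow_dvd_of_le {j K n : ℕ} (hjK : 2 ^ j ≤ 2 ^ K) (hK : 2 ^ K ∣ n) : 2 ^ j ∣ n :=
  (Nat.pow_dvd_pow 2 ((Nat.pow_le_pow_iff_right (by norm_num)).1 hjK)).trans hK

def IsGCPartition (s e a b : ℕ) (L R : ℤ → ℕ) : Prop :=
  L (-(a : ℤ)) = s ∧ R (b : ℤ) = e ∧
    (∀ i : ℤ, -(a : ℤ) ≤ i → i ≤ (b : ℤ) →
      L i ≤ R i ∧ IsGCInterval (L i) (R i) ∧ s ≤ L i ∧ R i ≤ e) ∧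
    (∀ i : ℤ, -(a : ℤ) ≤ i → i < (b : ℤ) → L (i + 1) = R i + 1) ∧
    (∀ i : ℤ, -(a : ℤ) < i → i ≤ 0 →
      2 * (R (i - 1) - L (i - 1) + 1) ≤ R i - L i + 1) ∧
    (∀ i : ℤ, 1 ≤ i → i < (b : ℤ) →
      2 * (R (i + 1) - L (i + 1) + 1) ≤ R i - L i + 1)

namespace IsGCPartition

lemma single {s e : ℕ} (h : IsGCInterval s e) :
    IsGCPartition s e 0 0 (fun _ => s) (fun _ => e) := by
  refine ⟨rfl, rfl, fun _ _ _ => ⟨h.le, h, le_rfl, le_rfl⟩, ?_, ?_, ?_⟩ <;> intros <;> omega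

lemma cons {s r e a b : ℕ} {L R : ℤ → ℕ} (hJ : IsGCInterval s r)
    (hP : IsGCPartition (r + 1) e a b L R)
    (hdouble : 2 * (r - s + 1) ≤ R (-a) - L (-a) + 1) :
    IsGCPartition s e (a + 1) b (fun i => if i < -a then s else L i)
      (fun i => if i < -a then r else R i) := by
  obtain ⟨hL, hR, hmem, hconsec, hdbl, hhalf⟩ := hP
  have hsr := hJ.le
  have hfirst := hmem (-a) le_rfl (by omega)
  refine ⟨by simp, by simp [hR], fun i hi hib => ?_, fun i hi hib => ?_, fun i hi hib => ?_,
    fun i hi hib => ?_⟩ <;> push_cast at hi hib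
  · by_cases h : i < -a
    · simp only [h, if_true]
      exact ⟨hsr, hJ, le_rfl, by omega⟩
    · simp only [h, if_false]
      obtain ⟨h1, h2, h3, h4⟩ := hmem i (by omega) hib
      exact ⟨h1, h2, by omega, h4⟩
  · by_cases h : i < -a
    · simp only [h, show ¬ i + 1 < -a by omega, if_true, if_false]
      rw [show i + 1 = -a by omega, hL]
    · simp only [h, show ¬ i + 1 < -a by omega, if_false]
      exact hconsec i (by omega) hib
  · by_cases h : i < -a + 1
    · simp only [show i - 1 < -a by omega, show ¬ i < -a by omega, if_true, if_false]
      rwa [show i = -a by omega]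
    · simp only [show ¬ i - 1 < -a by omega, show ¬ i < -a by omega, if_false]
      exact hdbl i (by omega) hib
  · simp only [show ¬ i + 1 < -a by omega, show ¬ i < -a by omega, if_false]
    exact hhalf i hi hib

lemma snoc {s r e a b : ℕ} {L R : ℤ → ℕ} (hP : IsGCPartition s r a b L R)
    (hJ : IsGCInterval (r + 1) e) (hhalf : b = 0 ∨ 2 * (e - r) ≤ R b - L b + 1) :
    IsGCPartition s e a (b + 1) (fun i => if b < i then r + 1 else L i)
      (fun i => if b < i then e else R i) := by
  obtain ⟨hL, hR, hmem, hconsec, hdbl, hhalf'⟩ := hP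
  have hre := hJ.le
  refine ⟨by simp [hL], by simp, fun i hi hib => ?_, fun i hi hib => ?_, fun i hi hib => ?_,
    fun i hi hib => ?_⟩ <;> push_cast at hi hib
  · by_cases h : b < i
    · simp only [h, if_true]
      have hfirst := hmem (-a) le_rfl (by omega)
      exact ⟨hre, hJ, by omega, le_rfl⟩
    · simp only [h, if_false]
      obtain ⟨h1, h2, h3, h4⟩ := hmem i hi (by omega)
      exact ⟨h1, h2, h3, by omega⟩
  · by_cases h : b < i + 1
    · simp only [h, show ¬ (b : ℤ) < i by omega, if_true, if_false]
      rw [show i = b by omega, hR]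
    · simp only [h, show ¬ (b : ℤ) < i by omega, if_false]
      exact hconsec i hi (by omega)
  · simp only [show ¬ (b : ℤ) < i by omega, show ¬ (b : ℤ) < i - 1 by omega, if_false]
    exact hdbl i hi hib
  · by_cases h : b < i + 1
    · simp only [h, show ¬ (b : ℤ) < i by omega, if_true, if_false]
      rcases hhalf with hb | hb
      · omega
      · rw [show i = b by omega]; omega
    · simp only [h, show ¬ (b : ℤ) < i by omega, if_false]
      exact hhalf' i hi (by omega)

end IsGCPartition

theorem exists_gcPartition_ascending {s r K : ℕ} (hs : 0 < s) (hsr : s ≤ r)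
    (hK : 2 ^ K ∣ r + 1) (hlen : r + 1 ≤ s + 2 ^ K) :
    ∃ a L R, IsGCPartition s r a 0 L R ∧
      R (-a) - L (-a) + 1 = 2 ^ padicValNat 2 (r + 1 - s) := by
  set j := padicValNat 2 (r + 1 - s)
  have hjd : 2 ^ j ∣ r + 1 - s := pow_padicValNat_dvd
  have hjle : 2 ^ j ≤ r + 1 - s := Nat.le_of_dvd (by omega) hjd
  have hjs : 2 ^ j ∣ s := by
    simpa [Nat.sub_sub_self (show s ≤ r + 1 by omega)] using
      Nat.dvd_sub (two_pow_dvd_of_le (by omega) hK) hjd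
  obtain ⟨t, ht⟩ : ∃ t, t + 1 = s + 2 ^ j := ⟨s + 2 ^ j - 1, by omega⟩
  have hblock : IsGCInterval s t := isGCInterval_of_two_pow_dvd hs hjs ht
  by_cases hlast : t = r
  · subst hlast
    exact ⟨0, _, _, .single hblock, by omega⟩
  · obtain ⟨a, L, R, hP, hfirst⟩ :=
      exists_gcPartition_ascending (s := t + 1) (r := r) (by omega) (by omega) hK (by omega)
    have hdouble : 2 ^ (j + 1) ≤ R (-a) - L (-a) + 1 := by
      rw [hfirst]
      refine two_pow_le_two_pow_padicValNat (by omega) ?_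
      rw [show r + 1 - (t + 1) = r + 1 - s - 2 ^ j by omega]
      exact two_pow_succ_padicValNat_dvd_sub _
    refine ⟨a + 1, _, _, hP.cons hblock (by rw [pow_succ] at hdouble; omega), ?_⟩
    simp only [Nat.cast_add, Nat.cast_one, neg_add_rev, Int.reduceNeg, add_lt_iff_neg_right,
      Int.neg_neg_iff_pos, zero_lt_one, ↓reduceIte]
    omega
termination_by r - s

theorem exists_gcPartition_descending {s r e a K : ℕ} {L R : ℤ → ℕ}
    (hP : IsGCPartition s r a 0 L R) (hK : 2 ^ K ∣ r + 1) (hre : r ≤ e)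
    (hlen : e < r + 2 ^ K) :
    ∃ b L' R', IsGCPartition s e a b L' R' ∧
      (b = 0 ∨ r < e ∧ R' b - L' b + 1 = 2 ^ padicValNat 2 (e - r)) := by
  rcases hre.eq_or_lt with rfl | hlt
  · exact ⟨0, L, R, hP, Or.inl rfl⟩
  set j := padicValNat 2 (e - r)
  have hjd : 2 ^ j ∣ e - r := pow_padicValNat_dvd
  have hjle : 2 ^ j ≤ e - r := Nat.le_of_dvd (by omega) hjd
  obtain ⟨t, ht⟩ : ∃ t, e = t + 2 ^ j := ⟨e - 2 ^ j, by omega⟩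
  have hjt : 2 ^ j ∣ t + 1 := by
    have : 2 ^ j ∣ (r + 1) + (e - r - 2 ^ j) :=
      dvd_add (two_pow_dvd_of_le (by omega) hK) (Nat.dvd_sub hjd dvd_rfl)
    rwa [show r + 1 + (e - r - 2 ^ j) = t + 1 by omega] at this
  have hblock : IsGCInterval (t + 1) e := isGCInterval_of_two_pow_dvd (by omega) hjt (by omega)
  obtain ⟨b, L', R', hP', hlast⟩ :=
    exists_gcPartition_descending (e := t) hP hK (by omega) (by omega)
  have hhalf : b = 0 ∨ 2 * (e - t) ≤ R' b - L' b + 1 := by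
    refine hlast.imp_right fun ⟨hrt, hlen'⟩ => ?_
    rw [hlen', show e - t = 2 ^ j by omega, ← pow_succ']
    refine two_pow_le_two_pow_padicValNat (by omega) ?_
    rw [show t - r = e - r - 2 ^ j by omega]
    exact two_pow_succ_padicValNat_dvd_sub _
  refine ⟨b + 1, _, _, hP'.snoc hblock hhalf, Or.inr ⟨hlt, ?_⟩⟩
  simp only [Nat.cast_add, Nat.cast_one, lt_add_iff_pos_right, zero_lt_one, ↓reduceIte]
  omega
termination_by e - r

/-- Lemma 5 of Daniely et al.: any interval `[I1..I2]` with `I1 ≥ 1` can be partitioned into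
consecutive geometric covering intervals `J^(−a), ..., J^(0), J^(1), ..., J^(b)` contained in
`[I1..I2]`, whose lengths at least double along the first sequence and at least halve along
the second. Here `J^(i) = [L i .. R i]`. -/
theorem geometric_covering_partition (I1 I2 : ℕ) (hI1 : 1 ≤ I1) (hI : I1 ≤ I2) :
    ∃ (a b : ℕ) (L R : ℤ → ℕ),
      L (-(a : ℤ)) = I1 ∧ R (b : ℤ) = I2 ∧
      (∀ i : ℤ, -(a : ℤ) ≤ i → i ≤ (b : ℤ) →
        L i ≤ R i ∧ IsGCInterval (L i) (R i) ∧ I1 ≤ L i ∧ R i ≤ I2) ∧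
      (∀ i : ℤ, -(a : ℤ) ≤ i → i < (b : ℤ) → L (i + 1) = R i + 1) ∧
      (∀ i : ℤ, -(a : ℤ) < i → i ≤ 0 →
        2 * (R (i - 1) - L (i - 1) + 1) ≤ R i - L i + 1) ∧
      (∀ i : ℤ, 1 ≤ i → i < (b : ℤ) →
        2 * (R (i + 1) - L (i + 1) + 1) ≤ R i - L i + 1) := by
  obtain ⟨K, m, hm, hmI2, hK, hmI1, hI2m⟩ := exists_two_pow_dvd_split (Nat.lt_succ_of_le hI)
  obtain ⟨r, rfl⟩ : ∃ r, m = r + 1 := ⟨m - 1, by omega⟩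
  obtain ⟨a, L, R, hP, -⟩ := exists_gcPartition_ascending (r := r) hI1 (by omega) hK hmI1
  obtain ⟨b, L', R', hP', -⟩ := exists_gcPartition_descending (e := I2) hP hK (by omega) (by omega)
  exact ⟨a, b, L', R', hP'⟩
end

section
/- (Regret of Sleeping CB) In the Sleeping CB setup with arbitrary real betting amounts w_{t,i}, let S_{T,i} = ∑_{t=1}^T I_{t,i} and suppose S_{T,i} ≥ 1 for all i. Suppose there exist real numbers F_i > 0, constants c1 > 0 and c_{2,i} ∈ ℝ such that for every i: (a) F_i ≤ 1 + ∑_{t=1}^T z_{t,i} w_{t,i}, and (b) ln F_i ≥ c1·(∑_{t=1}^T z_{t,i})²/S_{T,i} + c_{2,i}. Then for every u in the probability simplex Δ^N with π_i > 0 whenever u_i > 0, the regret satisfies Regret_T(u) ≤ sqrt( (1/c1) · (∑_{i=1}^N u_i S_{T,i}) · ( KL(u‖π) − ∑_{i=1}^N u_i c_{2,i} ) ). -/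
open Finset

/-!
Averaged over the prior `π`, every round's bets have nonpositive payoff: on the bet-on experts
the payoff is the `p̂_t`-weighted average of `h_t - ℓ_{t,i}`, which vanishes because `h_t` is the
`p_t`-mean loss, and on the others the clipped gain is paid against a nonpositive bet. Hence
`∑ π_i F_i ≤ 1`, and `ln x ≤ x - 1` turns this into `∑ u_i ln F_i ≤ KL(u‖π)`. The potential
bound then controls `∑ u_i (∑_t z_{t,i})² / S_{T,i}`, and Cauchy–Schwarz against the weights
`u_i S_{T,i}` bounds `∑ u_i ∑_t z_{t,i}`, which dominates the regret since
`g_{t,i} ≥ h_t - ℓ_{t,i}`.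
-/

/-- The gain `g_{t,i}` of Sleeping CB, for the instantaneous regret `d = h_t - ℓ_{t,i}` and the
bet `w = w_{t,i}`. -/
noncomputable def cbGain (d w : ℝ) : ℝ := if 0 < w then d else max d 0

lemma le_cbGain (d w : ℝ) : d ≤ cbGain d w := by
  unfold cbGain
  split_ifs
  exacts [le_rfl, le_max_left _ _]

lemma cbGain_mul_le (d w : ℝ) : cbGain d w * w ≤ max w 0 * d := by
  unfold cbGain
  split_ifs with hw
  · rw [max_eq_left hw.le, mul_comm]
  · rw [max_eq_right (not_lt.mp hw), zero_mul]
    exact mul_nonpos_of_nonneg_of_nonpos (le_max_right _ _) (not_lt.mp hw)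

lemma sum_prior_mul_cbGain_mul_nonpos {ι : Type*} [Fintype ι] (π I w ℓ p : ι → ℝ) (h : ℝ)
    (hπ : ∀ i, 0 ≤ π i) (hI : ∀ i, I i = 0 ∨ I i = 1)
    (hp : ∀ i, p i =
      if 0 < ∑ j, π j * I j * max (w j) 0
      then (π i * I i * max (w i) 0) / ∑ j, π j * I j * max (w j) 0
      else (π i * I i) / ∑ j, π j * I j)
    (hh : h = ∑ i, I i * p i * ℓ i) :
    ∑ i, π i * (I i * cbGain (h - ℓ i) (w i) * w i) ≤ 0 := by
  set q : ι → ℝ := fun i => π i * I i * max (w i) 0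
  have hI0 : ∀ i, 0 ≤ I i := fun i => by rcases hI i with hi | hi <;> simp [hi]
  have hq : ∀ i, 0 ≤ q i := fun i => mul_nonneg (mul_nonneg (hπ i) (hI0 i)) (le_max_right _ _)
  have hmean : ∑ i, q i * ℓ i = (∑ i, q i) * h := by
    by_cases hW : 0 < ∑ i, q i
    · have hterm : ∀ i, I i * p i * ℓ i = q i * ℓ i / ∑ j, q j := fun i => by
        rw [hp, if_pos hW]
        rcases hI i with hi | hi
        · simp [q, hi]
        · simp [q, hi]; ring
      rw [hh, sum_congr rfl fun i _ => hterm i, ← sum_div, mul_div_cancel₀ _ hW.ne']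
    · have hq0 : ∀ i ∈ univ, q i = 0 := (sum_eq_zero_iff_of_nonneg fun i _ => hq i).mp
        (le_antisymm (not_lt.mp hW) (sum_nonneg fun i _ => hq i))
      rw [sum_eq_zero hq0, zero_mul]
      exact sum_eq_zero fun i hi => by rw [hq0 i hi, zero_mul]
  calc ∑ i, π i * (I i * cbGain (h - ℓ i) (w i) * w i)
      ≤ ∑ i, q i * (h - ℓ i) := sum_le_sum fun i _ => by
        have := mul_le_mul_of_nonneg_left (cbGain_mul_le (h - ℓ i) (w i))
          (mul_nonneg (hπ i) (hI0 i))
        simp only [q]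
        linarith
    _ = (∑ i, q i) * h - ∑ i, q i * ℓ i := by simp only [mul_sub, sum_sub_distrib, sum_mul]
    _ = 0 := by rw [hmean, sub_self]

lemma sum_mul_le_one_of_le_one_add_sum {ι τ : Type*} [Fintype ι] [Fintype τ] (π F : ι → ℝ)
    (a : τ → ι → ℝ) (hπ : ∀ i, 0 ≤ π i) (hπ1 : ∑ i, π i = 1)
    (ha : ∀ t, ∑ i, π i * a t i ≤ 0) (hF : ∀ i, F i ≤ 1 + ∑ t, a t i) :
    ∑ i, π i * F i ≤ 1 := by
  have hgain : ∑ i, π i * ∑ t, a t i ≤ 0 := by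
    simp only [mul_sum]
    rw [sum_comm]
    exact sum_nonpos fun t _ => ha t
  calc ∑ i, π i * F i ≤ ∑ i, π i * (1 + ∑ t, a t i) :=
        sum_le_sum fun i _ => mul_le_mul_of_nonneg_left (hF i) (hπ i)
    _ = 1 + ∑ i, π i * ∑ t, a t i := by simp only [mul_add, mul_one, sum_add_distrib, hπ1]
    _ ≤ 1 := by linarith

lemma mul_log_sub_mul_log_div_le {u π F : ℝ} (hu : 0 ≤ u) (hπ : 0 ≤ π)
    (hsupp : 0 < u → 0 < π) (hF : 0 < F) :
    u * Real.log F - u * Real.log (u / π) ≤ π * F - u := by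
  rcases hu.eq_or_lt with rfl | hu
  · simpa using mul_nonneg hπ hF.le
  have hπ := hsupp hu
  calc u * Real.log F - u * Real.log (u / π) = u * Real.log (π * F / u) := by
        rw [Real.log_div (by positivity) hu.ne', Real.log_mul hπ.ne' hF.ne',
          Real.log_div hu.ne' hπ.ne']
        ring
    _ ≤ u * (π * F / u - 1) :=
        mul_le_mul_of_nonneg_left (Real.log_le_sub_one_of_pos (by positivity)) hu.le
    _ = π * F - u := by field_simp

lemma sum_mul_log_le_sum_mul_log_div {ι : Type*} [Fintype ι] (u π F : ι → ℝ)
    (hu : ∀ i, 0 ≤ u i) (hu1 : ∑ i, u i = 1) (hπ : ∀ i, 0 ≤ π i)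
    (hsupp : ∀ i, 0 < u i → 0 < π i) (hF : ∀ i, 0 < F i) (hπF : ∑ i, π i * F i ≤ 1) :
    ∑ i, u i * Real.log (F i) ≤ ∑ i, u i * Real.log (u i / π i) := by
  have := sum_le_sum fun i (_ : i ∈ univ) =>
    mul_log_sub_mul_log_div_le (hu i) (hπ i) (hsupp i) (hF i)
  rw [sum_sub_distrib, sum_sub_distrib, hu1] at this
  linarith

lemma sum_sum_mul_sub_le_sum_mul_sum_mul_cbGain {ι τ : Type*} [Fintype ι] [Fintype τ]
    (I d w : τ → ι → ℝ) (u : ι → ℝ) (hI : ∀ t i, 0 ≤ I t i) (hu : ∀ i, 0 ≤ u i) :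
    ∑ t, ∑ i, I t i * u i * d t i ≤ ∑ i, u i * ∑ t, I t i * cbGain (d t i) (w t i) := by
  rw [sum_comm]
  refine sum_le_sum fun i _ => ?_
  rw [mul_sum]
  refine sum_le_sum fun t _ => ?_
  have := mul_le_mul_of_nonneg_left (le_cbGain (d t i) (w t i)) (mul_nonneg (hI t i) (hu i))
  linarith

lemma sq_sum_mul_le_sum_mul_mul_sum_mul_sq_div {ι : Type*} [Fintype ι] (u S R : ι → ℝ)
    (hu : ∀ i, 0 ≤ u i) (hS : ∀ i, 0 < S i) :
    (∑ i, u i * R i) ^ 2 ≤ (∑ i, u i * S i) * ∑ i, u i * (R i ^ 2 / S i) :=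
  sum_sq_le_sum_mul_sum_of_sq_le_mul univ (fun i _ => mul_nonneg (hu i) (hS i).le)
    (fun i _ => mul_nonneg (hu i) (div_nonneg (sq_nonneg _) (hS i).le))
    fun i _ => le_of_eq (by field_simp [(hS i).ne'])

theorem sleeping_cb_regret_general
    (N T : ℕ)
    (π u : Fin N → ℝ)
    (hπ0 : ∀ i, 0 ≤ π i) (hπ1 : ∑ i, π i = 1)
    (hu0 : ∀ i, 0 ≤ u i) (hu1 : ∑ i, u i = 1)
    (hsupp : ∀ i, 0 < u i → 0 < π i)
    (ℓ Ind w p g z : Fin T → Fin N → ℝ)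
    (hInd : ∀ t i, Ind t i = 0 ∨ Ind t i = 1)
    (hp : ∀ t i, p t i =
      if 0 < ∑ j, π j * Ind t j * max (w t j) 0
      then (π i * Ind t i * max (w t i) 0) / ∑ j, π j * Ind t j * max (w t j) 0
      else (π i * Ind t i) / ∑ j, π j * Ind t j)
    (h : Fin T → ℝ)
    (hh : ∀ t, h t = ∑ i, Ind t i * p t i * ℓ t i)
    (hg : ∀ t i, g t i = if 0 < w t i then h t - ℓ t i else max (h t - ℓ t i) 0)
    (hz : ∀ t i, z t i = Ind t i * g t i)
    (S : Fin N → ℝ) (hS1 : ∀ i, 1 ≤ S i)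
    (F : Fin N → ℝ) (hF : ∀ i, 0 < F i)
    (c1 : ℝ) (hc1 : 0 < c1) (c2 : Fin N → ℝ)
    (hwealth : ∀ i, F i ≤ 1 + ∑ t, z t i * w t i)
    (hpot : ∀ i, c1 * (∑ t, z t i) ^ 2 / S i + c2 i ≤ Real.log (F i)) :
    ∑ t, ∑ i, Ind t i * u i * (h t - ℓ t i)
      ≤ Real.sqrt ((1 / c1) * (∑ i, u i * S i) *
          ((∑ i, u i * Real.log (u i / π i)) - ∑ i, u i * c2 i)) := by
  have hz' : ∀ t i, z t i = Ind t i * cbGain (h t - ℓ t i) (w t i) := fun t i => by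
    rw [hz, hg]; rfl
  have hround : ∀ t, ∑ i, π i * (z t i * w t i) ≤ 0 := fun t => by
    simpa only [hz'] using
      sum_prior_mul_cbGain_mul_nonpos π (Ind t) (w t) (ℓ t) (p t) (h t) hπ0 (hInd t) (hp t) (hh t)
  have hKL : ∑ i, u i * Real.log (F i) ≤ ∑ i, u i * Real.log (u i / π i) :=
    sum_mul_log_le_sum_mul_log_div u π F hu0 hu1 hπ0 hsupp hF
      (sum_mul_le_one_of_le_one_add_sum π F (fun t i => z t i * w t i) hπ0 hπ1 hround hwealth)
  have hregret : ∑ t, ∑ i, Ind t i * u i * (h t - ℓ t i) ≤ ∑ i, u i * ∑ t, z t i := by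
    simpa only [hz'] using sum_sum_mul_sub_le_sum_mul_sum_mul_cbGain Ind (fun t i => h t - ℓ t i)
      w u (fun t i => by rcases hInd t i with hI | hI <;> simp [hI]) hu0
  have hSpos : ∀ i, 0 < S i := fun i => one_pos.trans_le (hS1 i)
  have hquad : ∑ i, u i * ((∑ t, z t i) ^ 2 / S i)
      ≤ (1 / c1) * ((∑ i, u i * Real.log (u i / π i)) - ∑ i, u i * c2 i) := by
    have := sum_le_sum fun i (_ : i ∈ univ) => mul_le_mul_of_nonneg_left (hpot i) (hu0 i)
    simp only [mul_add, sum_add_distrib, mul_div_assoc, mul_left_comm (u _) c1, ← mul_sum] at this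
    rw [one_div, inv_mul_eq_div, le_div_iff₀ hc1]
    linarith
  calc ∑ t, ∑ i, Ind t i * u i * (h t - ℓ t i) ≤ ∑ i, u i * ∑ t, z t i := hregret
    _ ≤ Real.sqrt ((∑ i, u i * S i) * ∑ i, u i * ((∑ t, z t i) ^ 2 / S i)) :=
      (le_abs_self _).trans (Real.abs_le_sqrt
        (sq_sum_mul_le_sum_mul_mul_sum_mul_sq_div u S (fun i => ∑ t, z t i) hu0 hSpos))
    _ ≤ _ := by
      refine Real.sqrt_le_sqrt ?_
      have hA : 0 ≤ ∑ i, u i * S i := sum_nonneg fun i _ => mul_nonneg (hu0 i) (hSpos i).le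
      linarith [mul_le_mul_of_nonneg_left hquad hA]

/-- Theorem 1 (Regret of Sleeping CB): in the Sleeping CB setup with arbitrary real
betting amounts `w`, if each potential value `F i` lower-bounds the wealth of expert `i`
and `log (F i) ≥ c1 (∑_t z_{t,i})² / S_{T,i} + c2 i`, then the sleeping-experts regret
with respect to any `u` in the simplex is bounded by
`sqrt((1/c1) (∑_i u_i S_{T,i}) (KL(u‖π) − ∑_i u_i c2_i))`. -/
theorem sleeping_cb_regret
    (N T : ℕ)
    (π u : Fin N → ℝ)
    (hπ0 : ∀ i, 0 ≤ π i) (hπ1 : ∑ i, π i = 1)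
    (hu0 : ∀ i, 0 ≤ u i) (hu1 : ∑ i, u i = 1)
    (hsupp : ∀ i, 0 < u i → 0 < π i)
    (ℓ Ind w p g z : Fin T → Fin N → ℝ)
    (hℓ : ∀ t i, ℓ t i ∈ Set.Icc (0:ℝ) 1)
    (hInd : ∀ t i, Ind t i = 0 ∨ Ind t i = 1)
    (hawake : ∀ t, ∃ i, Ind t i = 1 ∧ 0 < π i)
    (hp : ∀ t i, p t i =
      if 0 < ∑ j, π j * Ind t j * max (w t j) 0
      then (π i * Ind t i * max (w t i) 0) / ∑ j, π j * Ind t j * max (w t j) 0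
      else (π i * Ind t i) / ∑ j, π j * Ind t j)
    (h : Fin T → ℝ)
    (hh : ∀ t, h t = ∑ i, Ind t i * p t i * ℓ t i)
    (hg : ∀ t i, g t i = if 0 < w t i then h t - ℓ t i else max (h t - ℓ t i) 0)
    (hz : ∀ t i, z t i = Ind t i * g t i)
    (S : Fin N → ℝ) (hS : ∀ i, S i = ∑ t, Ind t i) (hS1 : ∀ i, 1 ≤ S i)
    (F : Fin N → ℝ) (hF : ∀ i, 0 < F i)
    (c1 : ℝ) (hc1 : 0 < c1) (c2 : Fin N → ℝ)
    (hwealth : ∀ i, F i ≤ 1 + ∑ t, z t i * w t i)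
    (hpot : ∀ i, c1 * (∑ t, z t i) ^ 2 / S i + c2 i ≤ Real.log (F i)) :
    ∑ t, ∑ i, Ind t i * u i * (h t - ℓ t i)
      ≤ Real.sqrt ((1 / c1) * (∑ i, u i * S i) *
          ((∑ i, u i * Real.log (u i / π i)) - ∑ i, u i * c2 i)) :=
  sleeping_cb_regret_general N T π u hπ0 hπ1 hu0 hu1 hsupp ℓ Ind w p g z hInd hp h hh hg hz S hS1 F
    hF c1 hc1 c2 hwealth hpot
end

section
/- (Regret of Sleeping CB with the Krichevsky–Trofimov potential) In the Sleeping CB setup, define the betting amounts recursively by w_{t,i} = β_{t,i} · (1 + ∑_{s=1}^{t−1} z_{s,i} w_{s,i}) with betting fractions β_{t,i} = (∑_{s=1}^{t−1} z_{s,i}) / S_{t,i} whenever S_{t,i} ≥ 1 (and β_{t,i} = 0 otherwise), where S_{t,i} = ∑_{s=1}^{t} I_{s,i}. Then for every u ∈ Δ^N with π_i > 0 whenever u_i > 0, Regret_T(u) ≤ sqrt( 2 · (∑_{i=1}^N u_i S_{T,i}) · ( KL(u‖π) + (1/2)·ln T + 2 ) ). -/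
/-!
Each expert runs a Krichevsky–Trofimov coin bettor on its gains `z_{t,i}`, counting only the
rounds in which it is awake. The KT potential
`F(m, x) = 2^m Γ((m+1+x)/2) Γ((m+1-x)/2) / (π Γ(m+1))` is log-convex in `x` (because `Γ` is),
so after one more awake round with gain `|z| ≤ 1` the wealth still dominates `F(S_t, Z_t)`, where
`Z_t = ∑_{s ≤ t} z_{s,i}`. Because the learner plays proportionally to the positive bets, the
prior-weighted total wealth never exceeds its initial value `1`, and Gibbs' inequality turns this
into `∑ u_i ln W_i ≤ KL(u‖π)`. Euler's product for `Γ` and the duplication formula give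
`ln F(S, Z) ≥ Z²/(2S) - ½ ln S - 2`. The regret is at most `∑ u_i Z_i`, and Cauchy–Schwarz
finishes the proof.
-/

open Finset

namespace Real

open Filter Topology

lemma Gamma_mul_add_mul_le_rpow_Gamma_mul_rpow_Gamma_of_nonneg {s t a b : ℝ} (hs : 0 < s)
    (ht : 0 < t) (ha : 0 ≤ a) (hb : 0 ≤ b) (hab : a + b = 1) :
    Gamma (a * s + b * t) ≤ Gamma s ^ a * Gamma t ^ b := by
  rcases ha.eq_or_lt with rfl | ha
  · obtain rfl : b = 1 := by linarith
    simp
  rcases hb.eq_or_lt with rfl | hb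
  · obtain rfl : a = 1 := by linarith
    simp
  exact Gamma_mul_add_mul_le_rpow_Gamma_mul_rpow_Gamma hs ht ha hb hab

lemma Gamma_add_half_le_mul_sqrt {a : ℝ} (ha : 0 < a) : Gamma (a + 1 / 2) ≤ Gamma a * √a := by
  have hconv := Gamma_mul_add_mul_le_rpow_Gamma_mul_rpow_Gamma ha (by linarith : 0 < a + 1)
    one_half_pos one_half_pos (by norm_num)
  have hGa := Gamma_pos_of_pos ha
  calc Gamma (a + 1 / 2) = Gamma (1 / 2 * a + 1 / 2 * (a + 1)) := by ring_nf
    _ ≤ Gamma a ^ (1 / 2 : ℝ) * (a * Gamma a) ^ (1 / 2 : ℝ) := by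
      rwa [← Gamma_add_one ha.ne']
    _ = (Gamma a ^ (1 / 2 : ℝ) * Gamma a ^ (1 / 2 : ℝ)) * a ^ (1 / 2 : ℝ) := by
      rw [mul_rpow ha.le hGa.le]; ring
    _ = Gamma a * √a := by rw [← rpow_add hGa, sqrt_eq_rpow]; norm_num

lemma exp_sq_mul_inv_sub_inv_le {b u : ℝ} (hu : |u| < b) :
    exp (u ^ 2 * (1 / b - 1 / (b + 1))) ≤ b ^ 2 / ((b + u) * (b - u)) := by
  have hb : 0 < b := (abs_nonneg u).trans_lt hu
  have hub : u ^ 2 < b ^ 2 := sq_lt_sq' (abs_lt.1 hu).1 (abs_lt.1 hu).2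
  have hv : u ^ 2 * (1 / b - 1 / (b + 1)) = u ^ 2 / (b * (b + 1)) := by field_simp; ring
  -- `1 + y ≤ exp y` at `y = -u²/(b(b+1)) ≥ -u²/b²`
  have hexp : 1 - u ^ 2 / b ^ 2 ≤ exp (-(u ^ 2 / (b * (b + 1)))) := by
    have : u ^ 2 / (b * (b + 1)) ≤ u ^ 2 / b ^ 2 :=
      div_le_div_of_nonneg_left (sq_nonneg u) (by positivity) (by nlinarith)
    linarith [add_one_le_exp (-(u ^ 2 / (b * (b + 1))))]
  rw [hv, le_div_iff₀ (by nlinarith), ← le_div_iff₀' (exp_pos _), div_eq_mul_inv, ← exp_neg]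
  calc (b + u) * (b - u) = b ^ 2 * (1 - u ^ 2 / b ^ 2) := by field_simp; ring
    _ ≤ _ := mul_le_mul_of_nonneg_left hexp (sq_nonneg b)

lemma GammaSeq_mul_GammaSeq_div_sq {a u : ℝ} (hu : |u| < a) {n : ℕ} (hn : n ≠ 0) :
    GammaSeq (a + u) n * GammaSeq (a - u) n / GammaSeq a n ^ 2 =
      ∏ j ∈ range (n + 1), (a + j) ^ 2 / ((a + j + u) * (a + j - u)) := by
  have hj : ∀ j : ℕ, 0 < a + j + u ∧ 0 < a + j - u := fun j => by
    have := abs_lt.1 hu; have : (0 : ℝ) ≤ j := j.cast_nonneg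
    constructor <;> linarith
  have hnpos : (0 : ℝ) < n := by positivity
  have h1 : (0 : ℝ) < ∏ j ∈ range (n + 1), (a + u + j) :=
    prod_pos fun j _ => by linarith [(hj j).1]
  have h2 : (0 : ℝ) < ∏ j ∈ range (n + 1), (a - u + j) :=
    prod_pos fun j _ => by linarith [(hj j).2]
  have h3 : (0 : ℝ) < ∏ j ∈ range (n + 1), (a + j) :=
    prod_pos fun j _ => by linarith [(hj j).1, (hj j).2]
  rw [prod_div_distrib, prod_pow, prod_mul_distrib]
  simp only [GammaSeq, rpow_add hnpos, rpow_sub hnpos]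
  have e1 : ∏ j ∈ range (n + 1), (a + j + u) = ∏ j ∈ range (n + 1), (a + u + j) :=
    prod_congr rfl fun j _ => by ring
  have e2 : ∏ j ∈ range (n + 1), (a + j - u) = ∏ j ∈ range (n + 1), (a - u + j) :=
    prod_congr rfl fun j _ => by ring
  rw [e1, e2]
  have := rpow_pos_of_pos hnpos a
  have := rpow_pos_of_pos hnpos u
  field_simp

lemma Gamma_sq_mul_exp_le_Gamma_add_mul_Gamma_sub {a u : ℝ} (hu : |u| < a) :
    Gamma a ^ 2 * exp (u ^ 2 / a) ≤ Gamma (a + u) * Gamma (a - u) := by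
  have ha : 0 < a := (abs_nonneg u).trans_lt hu
  have hfactor (j : ℕ) : |u| < a + j := hu.trans_le (by simp)
  -- Each factor of Euler's product for the ratio is at least `exp (u² (1/(a+j) - 1/(a+j+1)))`,
  -- and these exponents telescope.
  have hlower (n : ℕ) : exp (u ^ 2 * (1 / a - 1 / (a + (n + 1 : ℕ)))) ≤
      ∏ j ∈ range (n + 1), (a + j) ^ 2 / ((a + j + u) * (a + j - u)) := by
    have htel := sum_range_sub' (fun j : ℕ => 1 / (a + j)) (n + 1)
    simp only [Nat.cast_zero, add_zero] at htel
    calc exp (u ^ 2 * (1 / a - 1 / (a + (n + 1 : ℕ))))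
        = ∏ j ∈ range (n + 1), exp (u ^ 2 * (1 / (a + j) - 1 / (a + j + 1))) := by
          rw [← exp_sum, ← mul_sum, ← htel]; push_cast; ring_nf
      _ ≤ _ := prod_le_prod (fun _ _ => (exp_pos _).le)
          fun j _ => exp_sq_mul_inv_sub_inv_le (hfactor j)
  have hlim_lower : Tendsto (fun n : ℕ => exp (u ^ 2 * (1 / a - 1 / (a + (n + 1 : ℕ)))))
      atTop (𝓝 (exp (u ^ 2 * (1 / a - 0)))) := by
    refine (continuous_exp.tendsto _).comp (((tendsto_const_nhds.sub ?_)).const_mul _)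
    simp only [one_div]
    exact tendsto_inv_atTop_zero.comp (tendsto_atTop_add_const_left _ a
      (tendsto_natCast_atTop_atTop.comp (tendsto_add_atTop_nat 1)))
  have hlim_prod : Tendsto (fun n : ℕ => ∏ j ∈ range (n + 1), (a + j) ^ 2 /
      ((a + j + u) * (a + j - u))) atTop (𝓝 (Gamma (a + u) * Gamma (a - u) / Gamma a ^ 2)) := by
    refine (((GammaSeq_tendsto_Gamma _).mul (GammaSeq_tendsto_Gamma _)).div
      ((GammaSeq_tendsto_Gamma a).pow 2) (by positivity)).congr' ?_
    filter_upwards [eventually_ne_atTop 0] with n hn using GammaSeq_mul_GammaSeq_div_sq hu hn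
  have := le_of_tendsto_of_tendsto' hlim_lower hlim_prod hlower
  rw [sub_zero, mul_one_div, le_div_iff₀ (by positivity)] at this
  linarith

lemma sum_mul_log_le_sum_mul_log_div {ι : Type*} [Fintype ι] {u q W : ι → ℝ}
    (hu : ∀ i, 0 ≤ u i) (hu1 : ∑ i, u i = 1) (hq : ∀ i, 0 ≤ q i)
    (hsupp : ∀ i, 0 < u i → 0 < q i) (hW : ∀ i, 0 < W i) (hqW : ∑ i, q i * W i ≤ 1) :
    ∑ i, u i * log (W i) ≤ ∑ i, u i * log (u i / q i) := by
  have hterm (i : ι) : u i * log (W i) ≤ u i * log (u i / q i) + (q i * W i - u i) := by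
    rcases (hu i).eq_or_lt with h0 | hpos
    · rw [← h0]; simpa using mul_nonneg (hq i) (hW i).le
    have hqi := hsupp i hpos
    have hWi := hW i
    have hlog : log (W i) = log (u i / q i) + log (q i * W i / u i) := by
      rw [← log_mul (by positivity) (by positivity)]
      congr 1
      field_simp
    have : u i * log (q i * W i / u i) ≤ u i * (q i * W i / u i - 1) :=
      mul_le_mul_of_nonneg_left (log_le_sub_one_of_pos (by positivity)) hpos.le
    rw [hlog, mul_add]
    rw [mul_sub, mul_div_cancel₀ _ hpos.ne', mul_one] at this
    linarith
  calc ∑ i, u i * log (W i) ≤ ∑ i, (u i * log (u i / q i) + (q i * W i - u i)) :=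
        sum_le_sum fun i _ => hterm i
    _ ≤ _ := by rw [sum_add_distrib, sum_sub_distrib, hu1]; linarith

lemma sum_mul_le_sqrt_mul_of_sq_le_mul {ι : Type*} [Fintype ι] {u Z A B : ι → ℝ}
    (hu : ∀ i, 0 ≤ u i) (hA : ∀ i, 0 ≤ A i) (hB : ∀ i, 0 ≤ B i)
    (hZ : ∀ i, Z i ^ 2 ≤ A i * B i) :
    ∑ i, u i * Z i ≤ √((∑ i, u i * A i) * (∑ i, u i * B i)) := by
  have hterm (i : ι) : u i * Z i ≤ √(u i * A i) * √(u i * B i) := by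
    rw [← sqrt_mul (mul_nonneg (hu i) (hA i))]
    refine le_sqrt_of_sq_le ?_
    calc (u i * Z i) ^ 2 = u i ^ 2 * Z i ^ 2 := by ring
      _ ≤ u i ^ 2 * (A i * B i) := mul_le_mul_of_nonneg_left (hZ i) (sq_nonneg _)
      _ = _ := by ring
  rw [sqrt_mul (sum_nonneg fun i _ => mul_nonneg (hu i) (hA i))]
  exact (sum_le_sum fun i _ => hterm i).trans (sum_sqrt_mul_sqrt_le _
    (fun i => mul_nonneg (hu i) (hA i)) fun i => mul_nonneg (hu i) (hB i))

end Real

section ZeroOne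

variable {α : Type*} [Zero α] [One α] [Preorder α] [ZeroLEOneClass α] {x : α}

lemma nonneg_of_eq_zero_or_eq_one (hx : x = 0 ∨ x = 1) : 0 ≤ x := by
  rcases hx with rfl | rfl
  exacts [le_rfl, zero_le_one]

lemma le_one_of_eq_zero_or_eq_one (hx : x = 0 ∨ x = 1) : x ≤ 1 := by
  rcases hx with rfl | rfl
  exacts [zero_le_one, le_rfl]

end ZeroOne

lemma Finset.sum_eq_zero_or_one_le_sum {α : Type*} (s : Finset α) {f : α → ℝ}
    (hf : ∀ a, f a = 0 ∨ f a = 1) : ∑ a ∈ s, f a = 0 ∨ 1 ≤ ∑ a ∈ s, f a := by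
  by_cases hzero : ∀ a ∈ s, f a = 0
  · exact .inl (sum_eq_zero hzero)
  · push Not at hzero
    obtain ⟨a, ha, hfa⟩ := hzero
    exact .inr (((hf a).resolve_left hfa).symm.le.trans
      (single_le_sum (fun b _ => nonneg_of_eq_zero_or_eq_one (hf b)) ha))

namespace SleepingCB

section KTPotential

open Real

noncomputable def ktPotential (m x : ℝ) : ℝ :=
  2 ^ m * Gamma ((m + 1 + x) / 2) * Gamma ((m + 1 - x) / 2) / (π * Gamma (m + 1))

lemma ktPotential_zero_zero : ktPotential 0 0 = 1 := by
  norm_num [ktPotential, Gamma_one_half_eq]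
  field_simp
  exact sq_sqrt pi_pos.le

lemma ktPotential_neg (m x : ℝ) : ktPotential m (-x) = ktPotential m x := by
  simp only [ktPotential, sub_neg_eq_add, ← sub_eq_add_neg]
  ring

lemma ktPotential_pos {m x : ℝ} (hx : |x| < m + 1) : 0 < ktPotential m x := by
  obtain ⟨h1, h2⟩ := abs_lt.1 hx
  have := Gamma_pos_of_pos (by linarith : 0 < (m + 1 + x) / 2)
  have := Gamma_pos_of_pos (by linarith : 0 < (m + 1 - x) / 2)
  have := Gamma_pos_of_pos (by linarith : 0 < m + 1)
  unfold ktPotential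
  positivity

lemma ktPotential_add_one_add_one {m x : ℝ} (hm : m + 1 ≠ 0) (hx : m + 1 + x ≠ 0) :
    ktPotential (m + 1) (x + 1) = ktPotential m x * ((m + 1 + x) / (m + 1)) := by
  have hΓ₁ := Gamma_add_one (div_ne_zero hx two_ne_zero)
  have hΓ₂ := Gamma_add_one hm
  unfold ktPotential
  rw [show (m + 1 + 1 + (x + 1)) / 2 = (m + 1 + x) / 2 + 1 by ring,
    show (m + 1 + 1 - (x + 1)) / 2 = (m + 1 - x) / 2 by ring, hΓ₁, hΓ₂,
    rpow_add_one two_ne_zero]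
  field_simp

lemma ktPotential_add_one_sub_one {m x : ℝ} (hm : m + 1 ≠ 0) (hx : m + 1 - x ≠ 0) :
    ktPotential (m + 1) (x - 1) = ktPotential m x * ((m + 1 - x) / (m + 1)) := by
  have := ktPotential_add_one_add_one hm (by rwa [← sub_eq_add_neg])
  rw [ktPotential_neg] at this
  rw [← ktPotential_neg, neg_sub', sub_neg_eq_add, this, ← sub_eq_add_neg]

lemma ktPotential_mul_add_mul_le {m x y a b : ℝ} (hx : |x| < m + 1) (hy : |y| < m + 1)
    (ha : 0 ≤ a) (hb : 0 ≤ b) (hab : a + b = 1) :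
    ktPotential m (a * x + b * y) ≤ ktPotential m x ^ a * ktPotential m y ^ b := by
  obtain ⟨hx₁, hx₂⟩ := abs_lt.1 hx
  obtain ⟨hy₁, hy₂⟩ := abs_lt.1 hy
  set c := 2 ^ m / (π * Gamma (m + 1))
  have hc : 0 < c := by
    have := Gamma_pos_of_pos (by linarith : 0 < m + 1)
    positivity
  have hF (z : ℝ) :
      ktPotential m z = c * (Gamma ((m + 1 + z) / 2) * Gamma ((m + 1 - z) / 2)) := by
    simp only [ktPotential, c]; ring
  have hΓ₁ := Gamma_mul_add_mul_le_rpow_Gamma_mul_rpow_Gamma_of_nonneg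
    (by linarith : 0 < (m + 1 + x) / 2) (by linarith : 0 < (m + 1 + y) / 2) ha hb hab
  have hΓ₂ := Gamma_mul_add_mul_le_rpow_Gamma_mul_rpow_Gamma_of_nonneg
    (by linarith : 0 < (m + 1 - x) / 2) (by linarith : 0 < (m + 1 - y) / 2) ha hb hab
  rw [show a * ((m + 1 + x) / 2) + b * ((m + 1 + y) / 2) = (m + 1 + (a * x + b * y)) / 2 by
    linear_combination (m + 1) / 2 * hab] at hΓ₁
  rw [show a * ((m + 1 - x) / 2) + b * ((m + 1 - y) / 2) = (m + 1 - (a * x + b * y)) / 2 by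
    linear_combination (m + 1) / 2 * hab] at hΓ₂
  have := Gamma_pos_of_pos (by linarith : 0 < (m + 1 + x) / 2)
  have := Gamma_pos_of_pos (by linarith : 0 < (m + 1 - x) / 2)
  have := Gamma_pos_of_pos (by linarith : 0 < (m + 1 + y) / 2)
  have := Gamma_pos_of_pos (by linarith : 0 < (m + 1 - y) / 2)
  have hxy := convex_Ioo (-(m + 1)) (m + 1) ⟨hx₁, hx₂⟩ ⟨hy₁, hy₂⟩ ha hb hab
  simp only [smul_eq_mul, Set.mem_Ioo] at hxy
  have := Gamma_pos_of_pos (by linarith : 0 < (m + 1 - (a * x + b * y)) / 2)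
  calc ktPotential m (a * x + b * y)
      ≤ c * ((Gamma ((m + 1 + x) / 2) ^ a * Gamma ((m + 1 + y) / 2) ^ b) *
          (Gamma ((m + 1 - x) / 2) ^ a * Gamma ((m + 1 - y) / 2) ^ b)) := by
        rw [hF]; gcongr
    _ = (c ^ a * c ^ b) * ((Gamma ((m + 1 + x) / 2) ^ a * Gamma ((m + 1 - x) / 2) ^ a) *
          (Gamma ((m + 1 + y) / 2) ^ b * Gamma ((m + 1 - y) / 2) ^ b)) := by
        rw [← rpow_add hc, hab, rpow_one]; ring
    _ = ktPotential m x ^ a * ktPotential m y ^ b := by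
        rw [hF, hF, mul_rpow hc.le (by positivity), mul_rpow hc.le (by positivity),
          mul_rpow (by positivity) (by positivity), mul_rpow (by positivity) (by positivity)]
        ring

lemma ktPotential_add_one_le {m x t : ℝ} (hm : 0 ≤ m) (hx : |x| ≤ m) (ht : |t| ≤ 1) :
    ktPotential (m + 1) (x + t) ≤ ktPotential m x * (1 + x * t / (m + 1)) := by
  obtain ⟨hx₁, hx₂⟩ := abs_le.1 hx
  obtain ⟨ht₁, ht₂⟩ := abs_le.1 ht
  have hm1 : |x - 1| < m + 1 + 1 := abs_lt.2 ⟨by linarith, by linarith⟩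
  have hp1 : |x + 1| < m + 1 + 1 := abs_lt.2 ⟨by linarith, by linarith⟩
  have ha : 0 ≤ (1 - t) / 2 := by linarith
  have hb : 0 ≤ (1 + t) / 2 := by linarith
  have hab : (1 - t) / 2 + (1 + t) / 2 = 1 := by ring
  calc ktPotential (m + 1) (x + t)
      = ktPotential (m + 1) ((1 - t) / 2 * (x - 1) + (1 + t) / 2 * (x + 1)) := by ring_nf
    _ ≤ ktPotential (m + 1) (x - 1) ^ ((1 - t) / 2) *
          ktPotential (m + 1) (x + 1) ^ ((1 + t) / 2) :=
        ktPotential_mul_add_mul_le hm1 hp1 ha hb hab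
    _ ≤ (1 - t) / 2 * ktPotential (m + 1) (x - 1) + (1 + t) / 2 * ktPotential (m + 1) (x + 1) :=
        geom_mean_le_arith_mean2_weighted ha hb (ktPotential_pos hm1).le
          (ktPotential_pos hp1).le hab
    _ = ktPotential m x * (1 + x * t / (m + 1)) := by
        have hm₀ : m + 1 ≠ 0 := by linarith
        rw [ktPotential_add_one_sub_one hm₀ (by linarith : 0 < m + 1 - x).ne',
          ktPotential_add_one_add_one hm₀ (by linarith : 0 < m + 1 + x).ne']
        field_simp
        ring

lemma ktPotential_eq_Gamma_div (m x : ℝ) :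
    ktPotential m x = Gamma ((m + 1 + x) / 2) * Gamma ((m + 1 - x) / 2) /
      (√π * (Gamma ((m + 1) / 2) * Gamma ((m + 1) / 2 + 1 / 2))) := by
  rw [Gamma_mul_Gamma_add_half, show 2 * ((m + 1) / 2) = m + 1 by ring,
    show 1 - (m + 1) = -m by ring, rpow_neg zero_le_two, ktPotential]
  field_simp
  rw [sq_sqrt pi_pos.le]

lemma exp_div_sqrt_le_ktPotential {m x : ℝ} (hx : |x| < m + 1) :
    exp (x ^ 2 / (2 * (m + 1))) / √(π * ((m + 1) / 2)) ≤ ktPotential m x := by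
  set a := (m + 1) / 2
  have ha : 0 < a := by have := abs_nonneg x; simp only [a]; linarith
  have hu : |x / 2| < a := by rw [abs_div, abs_two]; simp only [a]; linarith
  have hprod := Gamma_sq_mul_exp_le_Gamma_add_mul_Gamma_sub hu
  rw [show (x / 2) ^ 2 / a = x ^ 2 / (2 * (m + 1)) by simp only [a]; field_simp,
    show a + x / 2 = (m + 1 + x) / 2 by ring, show a - x / 2 = (m + 1 - x) / 2 by ring] at hprod
  rw [ktPotential_eq_Gamma_div, sqrt_mul pi_pos.le]
  calc exp (x ^ 2 / (2 * (m + 1))) / (√π * √a)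
      = Gamma a ^ 2 * exp (x ^ 2 / (2 * (m + 1))) / (√π * (Gamma a * (Gamma a * √a))) := by
        field_simp
    _ ≤ _ := by
        gcongr ?_ / (_ * (_ * ?_))
        · exact (by positivity : 0 ≤ Gamma a ^ 2 * exp (x ^ 2 / (2 * (m + 1)))).trans hprod
        · exact Gamma_add_half_le_mul_sqrt ha

lemma exp_sub_le_ktPotential {m x : ℝ} (hm : 1 ≤ m) (hx : |x| ≤ m) :
    exp (x ^ 2 / (2 * m) - log m / 2 - 2) ≤ ktPotential m x := by
  have hm0 : 0 < m := by linarith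
  refine le_trans ?_ (exp_div_sqrt_le_ktPotential (by linarith))
  have hx2 : x ^ 2 ≤ m ^ 2 := sq_le_sq' (abs_le.1 hx).1 (abs_le.1 hx).2
  -- the two exponents differ by `x² / (2m(m+1)) ≤ 1/2`
  have hexp : x ^ 2 / (2 * m) ≤ x ^ 2 / (2 * (m + 1)) + 1 / 2 := by
    rw [div_add_div _ _ (by positivity) two_ne_zero,
      div_le_div_iff₀ (by positivity) (by positivity)]
    nlinarith
  have hlog : log (π * ((m + 1) / 2)) ≤ log m + 3 := by
    have h4 : π * ((m + 1) / 2) ≤ 4 * m := by nlinarith [pi_le_four, pi_pos]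
    calc log (π * ((m + 1) / 2)) ≤ log (4 * m) := log_le_log (by positivity) h4
      _ = log 4 + log m := log_mul (by norm_num) hm0.ne'
      _ ≤ log m + 3 := by linarith [log_le_sub_one_of_pos (by norm_num : (0 : ℝ) < 4)]
  rw [sqrt_eq_rpow, rpow_def_of_pos (by positivity), ← exp_sub, exp_le_exp]
  linarith

end KTPotential

section Round

variable {ι : Type*} [Fintype ι] {π I w ℓ : ι → ℝ}

/- One round with awake indicators `I` and bets `w`: `play π I w` is the learner's distribution
`p_t`, `loss π I w ℓ` is its loss `h_t`, and `gain (w i) h (ℓ i)` is `g_{t,i}`. -/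

noncomputable def play (π I w : ι → ℝ) (i : ι) : ℝ :=
  if 0 < ∑ j, π j * I j * max (w j) 0
  then π i * I i * max (w i) 0 / ∑ j, π j * I j * max (w j) 0
  else π i * I i / ∑ j, π j * I j

noncomputable def loss (π I w ℓ : ι → ℝ) : ℝ := ∑ i, I i * play π I w i * ℓ i

noncomputable def gain (w h l : ℝ) : ℝ := if 0 < w then h - l else max (h - l) 0

lemma mul_play (hI : ∀ i, I i = 0 ∨ I i = 1) (i : ι) :
    I i * play π I w i = play π I w i := by
  rcases hI i with h | h <;> simp [play, h]

lemma play_nonneg (hπ : ∀ i, 0 ≤ π i) (hI : ∀ i, I i = 0 ∨ I i = 1) (i : ι) :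
    0 ≤ play π I w i := by
  have hπI (j : ι) : 0 ≤ π j * I j := mul_nonneg (hπ j) (nonneg_of_eq_zero_or_eq_one (hI j))
  unfold play
  split_ifs with hD
  · exact div_nonneg (mul_nonneg (hπI i) (le_max_right _ _)) hD.le
  · exact div_nonneg (hπI i) (sum_nonneg fun j _ => hπI j)

lemma sum_play (hπ : ∀ i, 0 ≤ π i) (hI : ∀ i, I i = 0 ∨ I i = 1)
    (hawake : ∃ i, I i = 1 ∧ 0 < π i) : ∑ i, play π I w i = 1 := by
  obtain ⟨k, hk, hπk⟩ := hawake
  have hE : 0 < ∑ j, π j * I j := by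
    refine lt_of_lt_of_le ?_ (single_le_sum
      (fun j _ => mul_nonneg (hπ j) (nonneg_of_eq_zero_or_eq_one (hI j))) (mem_univ k))
    simpa [hk] using hπk
  unfold play
  split_ifs with hD
  · rw [← sum_div, div_self hD.ne']
  · rw [← sum_div, div_self hE.ne']

lemma loss_mem_Icc (hπ : ∀ i, 0 ≤ π i) (hI : ∀ i, I i = 0 ∨ I i = 1)
    (hawake : ∃ i, I i = 1 ∧ 0 < π i) (hℓ : ∀ i, ℓ i ∈ Set.Icc 0 1) :
    loss π I w ℓ ∈ Set.Icc 0 1 := by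
  simp only [loss, mul_play hI]
  refine ⟨sum_nonneg fun i _ => mul_nonneg (play_nonneg hπ hI i) (hℓ i).1, ?_⟩
  calc ∑ i, play π I w i * ℓ i ≤ ∑ i, play π I w i :=
        sum_le_sum fun i _ => mul_le_of_le_one_right (play_nonneg hπ hI i) (hℓ i).2
    _ = 1 := sum_play hπ hI hawake

lemma sum_bet_mul_loss_sub (hπ : ∀ i, 0 ≤ π i) (hI : ∀ i, I i = 0 ∨ I i = 1)
    (hawake : ∃ i, I i = 1 ∧ 0 < π i) :
    ∑ i, π i * I i * max (w i) 0 * (loss π I w ℓ - ℓ i) = 0 := by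
  have hbet (i : ι) : 0 ≤ π i * I i * max (w i) 0 :=
    mul_nonneg (mul_nonneg (hπ i) (nonneg_of_eq_zero_or_eq_one (hI i))) (le_max_right _ _)
  by_cases hD : 0 < ∑ j, π j * I j * max (w j) 0
  · have hplay (i : ι) :
        π i * I i * max (w i) 0 = (∑ j, π j * I j * max (w j) 0) * play π I w i := by
      rw [play, if_pos hD, mul_div_cancel₀ _ hD.ne']
    have hloss : ∑ i, play π I w i * ℓ i = loss π I w ℓ := by simp only [loss, mul_play hI]
    rw [sum_congr rfl fun i _ => congrArg (· * (loss π I w ℓ - ℓ i)) (hplay i)]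
    simp only [mul_assoc, ← mul_sum, mul_sub, sum_sub_distrib, ← sum_mul,
      sum_play hπ hI hawake, hloss, one_mul, sub_self]
  · have hzero := (sum_eq_zero_iff_of_nonneg fun i _ => hbet i).1
      (le_antisymm (not_lt.1 hD) (sum_nonneg fun i _ => hbet i))
    exact sum_eq_zero fun i hi => by rw [hzero i hi, zero_mul]

lemma abs_gain_le_one {w h l : ℝ} (hh : h ∈ Set.Icc 0 1) (hl : l ∈ Set.Icc 0 1) :
    |gain w h l| ≤ 1 := by
  obtain ⟨hh₀, hh₁⟩ := hh
  obtain ⟨hl₀, hl₁⟩ := hl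
  unfold gain
  split_ifs
  · exact abs_le.2 ⟨by linarith, by linarith⟩
  · exact abs_le.2 ⟨by linarith [le_max_right (h - l) 0], max_le (by linarith) zero_le_one⟩

lemma sub_le_gain (w h l : ℝ) : h - l ≤ gain w h l := by
  unfold gain
  split_ifs
  exacts [le_rfl, le_max_left _ _]

lemma gain_mul_le (w h l : ℝ) : gain w h l * w ≤ max w 0 * (h - l) := by
  unfold gain
  split_ifs with hw
  · rw [max_eq_left hw.le, mul_comm]
  · rw [max_eq_right (not_lt.1 hw), zero_mul]
    exact mul_nonpos_of_nonneg_of_nonpos (le_max_right _ _) (not_lt.1 hw)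

lemma sum_mul_gain_mul_le_zero (hπ : ∀ i, 0 ≤ π i) (hI : ∀ i, I i = 0 ∨ I i = 1)
    (hawake : ∃ i, I i = 1 ∧ 0 < π i) :
    ∑ i, π i * (I i * gain (w i) (loss π I w ℓ) (ℓ i) * w i) ≤ 0 := by
  rw [← sum_bet_mul_loss_sub (w := w) (ℓ := ℓ) hπ hI hawake]
  refine sum_le_sum fun i _ => ?_
  have hπI : 0 ≤ π i * I i := mul_nonneg (hπ i) (nonneg_of_eq_zero_or_eq_one (hI i))
  calc π i * (I i * gain (w i) (loss π I w ℓ) (ℓ i) * w i)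
      = π i * I i * (gain (w i) (loss π I w ℓ) (ℓ i) * w i) := by ring
    _ ≤ π i * I i * (max (w i) 0 * (loss π I w ℓ - ℓ i)) :=
      mul_le_mul_of_nonneg_left (gain_mul_le _ _ _) hπI
    _ = _ := by ring

lemma round_gain_bounds {p g z : ι → ℝ} {h : ℝ} (hπ : ∀ i, 0 ≤ π i)
    (hI : ∀ i, I i = 0 ∨ I i = 1) (hawake : ∃ i, I i = 1 ∧ 0 < π i)
    (hℓ : ∀ i, ℓ i ∈ Set.Icc 0 1) (hp : ∀ i, p i = play π I w i)
    (hh : h = ∑ i, I i * p i * ℓ i) (hg : ∀ i, g i = gain (w i) h (ℓ i))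
    (hz : ∀ i, z i = I i * g i) :
    (∀ i, |z i| ≤ I i) ∧ (∀ i, I i * (h - ℓ i) ≤ z i) ∧
      ∑ i, π i * (z i * w i) ≤ 0 := by
  obtain rfl : p = play π I w := funext hp
  obtain rfl : h = loss π I w ℓ := hh
  have hI0 (i : ι) : 0 ≤ I i := nonneg_of_eq_zero_or_eq_one (hI i)
  simp only [hz, hg]
  refine ⟨fun i => ?_, fun i => mul_le_mul_of_nonneg_left (sub_le_gain _ _ _) (hI0 i),
    sum_mul_gain_mul_le_zero hπ hI hawake⟩
  rw [abs_mul, abs_of_nonneg (hI0 i)]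
  exact mul_le_of_le_one_right (hI0 i) (abs_gain_le_one (loss_mem_Icc hπ hI hawake hℓ) (hℓ i))

end Round

lemma ktPotential_le_wealth {I z w : ℕ → ℝ} {t : ℕ} (hI : ∀ s, I s = 0 ∨ I s = 1)
    (hz : ∀ s ∈ Icc 1 t, |z s| ≤ I s)
    (hw : ∀ s, w s = (if 1 ≤ ∑ r ∈ Icc 1 s, I r then (∑ r ∈ Icc 1 (s - 1), z r) /
      ∑ r ∈ Icc 1 s, I r else 0) * (1 + ∑ r ∈ Icc 1 (s - 1), z r * w r)) :
    ktPotential (∑ s ∈ Icc 1 t, I s) (∑ s ∈ Icc 1 t, z s) ≤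
      1 + ∑ s ∈ Icc 1 t, z s * w s := by
  induction t with
  | zero => simp [ktPotential_zero_zero]
  | succ n ih =>
    have hz' : ∀ s ∈ Icc 1 n, |z s| ≤ I s :=
      fun s hs => hz s (Icc_subset_Icc_right n.le_succ hs)
    have hzn : |z (n + 1)| ≤ I (n + 1) := hz _ (by simp)
    have hZ : |∑ s ∈ Icc 1 n, z s| ≤ ∑ s ∈ Icc 1 n, I s :=
      (abs_sum_le_sum_abs _ _).trans (sum_le_sum hz')
    have hS : 0 ≤ ∑ s ∈ Icc 1 n, I s :=
      sum_nonneg fun s _ => nonneg_of_eq_zero_or_eq_one (hI s)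
    simp only [sum_Icc_succ_top (Nat.le_add_left 1 n)]
    rcases hI (n + 1) with h0 | h1
    · have hz0 : z (n + 1) = 0 := abs_nonpos_iff.1 (h0 ▸ hzn)
      simpa [h0, hz0] using ih hz'
    rw [h1] at hzn ⊢
    have hwn : w (n + 1) = (∑ s ∈ Icc 1 n, z s) / (∑ s ∈ Icc 1 n, I s + 1) *
        (1 + ∑ s ∈ Icc 1 n, z s * w s) := by
      rw [hw, sum_Icc_succ_top (Nat.le_add_left 1 n), h1, if_pos (by linarith)]
      simp
    have hstep : 0 ≤ 1 + (∑ s ∈ Icc 1 n, z s) * z (n + 1) / (∑ s ∈ Icc 1 n, I s + 1) := by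
      have := neg_abs_le ((∑ s ∈ Icc 1 n, z s) * z (n + 1))
      have := abs_mul (∑ s ∈ Icc 1 n, z s) (z (n + 1)) ▸ mul_le_mul hZ hzn (abs_nonneg _) hS
      rw [← neg_le_iff_add_nonneg', le_div_iff₀ (by linarith)]
      linarith
    calc ktPotential (∑ s ∈ Icc 1 n, I s + 1) (∑ s ∈ Icc 1 n, z s + z (n + 1))
        ≤ ktPotential (∑ s ∈ Icc 1 n, I s) (∑ s ∈ Icc 1 n, z s) *
          (1 + (∑ s ∈ Icc 1 n, z s) * z (n + 1) / (∑ s ∈ Icc 1 n, I s + 1)) :=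
          ktPotential_add_one_le hS hZ hzn
      _ ≤ (1 + ∑ s ∈ Icc 1 n, z s * w s) *
          (1 + (∑ s ∈ Icc 1 n, z s) * z (n + 1) / (∑ s ∈ Icc 1 n, I s + 1)) :=
          mul_le_mul_of_nonneg_right (ih hz') hstep
      _ = 1 + (∑ s ∈ Icc 1 n, z s * w s + z (n + 1) * w (n + 1)) := by
          rw [hwn]; ring

lemma sum_mul_one_add_sum_le_one {κ ι : Type*} [Fintype ι] {q : ι → ℝ} (hq : ∑ i, q i = 1)
    (s : Finset κ) {x : κ → ι → ℝ} (hx : ∀ t ∈ s, ∑ i, q i * x t i ≤ 0) :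
    ∑ i, q i * (1 + ∑ t ∈ s, x t i) ≤ 1 := by
  simp only [mul_add, mul_one, sum_add_distrib, hq, mul_sum]
  rw [sum_comm]
  linarith [sum_nonpos hx]

lemma sq_le_two_mul_mul_log_of_ktPotential_le {S Z W : ℝ} {T : ℕ} (hS : S = 0 ∨ 1 ≤ S)
    (hST : S ≤ T) (hZ : |Z| ≤ S) (hW : ktPotential S Z ≤ W) :
    0 ≤ Real.log W + 1 / 2 * Real.log T + 2 ∧
      Z ^ 2 ≤ 2 * S * (Real.log W + 1 / 2 * Real.log T + 2) := by
  have hT : 0 ≤ Real.log T := Real.log_natCast_nonneg T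
  rcases hS with rfl | hS
  · obtain rfl : Z = 0 := abs_nonpos_iff.1 hZ
    rw [ktPotential_zero_zero] at hW
    have := Real.log_nonneg hW
    constructor <;> nlinarith
  have hF := (exp_sub_le_ktPotential hS hZ).trans hW
  have hlog : Z ^ 2 / (2 * S) - Real.log S / 2 - 2 ≤ Real.log W :=
    (Real.le_log_iff_exp_le ((Real.exp_pos _).trans_le hF)).2 hF
  have hlogS : Real.log S ≤ Real.log T := Real.log_le_log (by linarith) hST
  have hZS : 0 ≤ Z ^ 2 / (2 * S) := by positivity
  refine ⟨by linarith, ?_⟩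
  rw [div_sub' (by positivity), div_sub' (by positivity), div_le_iff₀ (by positivity)] at hlog
  nlinarith

lemma wealth_pos_and_sq_sum_le {I z : ℕ → ℝ} {W : ℝ} {T : ℕ}
    (hI : ∀ s, I s = 0 ∨ I s = 1)
    (hz : ∀ s ∈ Icc 1 T, |z s| ≤ I s)
    (hW : ktPotential (∑ s ∈ Icc 1 T, I s) (∑ s ∈ Icc 1 T, z s) ≤ W) :
    0 < W ∧ 0 ≤ Real.log W + 1 / 2 * Real.log T + 2 ∧
      (∑ s ∈ Icc 1 T, z s) ^ 2 ≤
        2 * (∑ s ∈ Icc 1 T, I s) * (Real.log W + 1 / 2 * Real.log T + 2) := by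
  have hZ : |∑ s ∈ Icc 1 T, z s| ≤ ∑ s ∈ Icc 1 T, I s :=
    (abs_sum_le_sum_abs _ _).trans (sum_le_sum hz)
  have hST : ∑ s ∈ Icc 1 T, I s ≤ T := by
    simpa using sum_le_card_nsmul (Icc 1 T) I 1 fun s _ => le_one_of_eq_zero_or_eq_one (hI s)
  exact ⟨(ktPotential_pos (by linarith [abs_nonneg (∑ s ∈ Icc 1 T, z s)])).trans_le hW,
    sq_le_two_mul_mul_log_of_ktPotential_le (sum_eq_zero_or_one_le_sum _ hI) hST hZ hW⟩

end SleepingCB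

open SleepingCB

theorem sleeping_cb_kt_regret_general
    (N T : ℕ)
    (π u : Fin N → ℝ)
    (hπ0 : ∀ i, 0 ≤ π i) (hπ1 : ∑ i, π i = 1)
    (hu0 : ∀ i, 0 ≤ u i) (hu1 : ∑ i, u i = 1)
    (hsupp : ∀ i, 0 < u i → 0 < π i)
    (ℓ Ind w p g z S : ℕ → Fin N → ℝ) (h : ℕ → ℝ)
    (hℓ : ∀ t i, ℓ t i ∈ Set.Icc (0:ℝ) 1)
    (hInd : ∀ t i, Ind t i = 0 ∨ Ind t i = 1)
    (hawake : ∀ t, 1 ≤ t → t ≤ T → ∃ i, Ind t i = 1 ∧ 0 < π i)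
    (hS : ∀ t i, S t i = ∑ s ∈ Finset.Icc 1 t, Ind s i)
    (hw : ∀ t i, w t i =
      (if 1 ≤ S t i then (∑ s ∈ Finset.Icc 1 (t - 1), z s i) / S t i else 0) *
        (1 + ∑ s ∈ Finset.Icc 1 (t - 1), z s i * w s i))
    (hp : ∀ t i, p t i =
      if 0 < ∑ j, π j * Ind t j * max (w t j) 0
      then (π i * Ind t i * max (w t i) 0) / ∑ j, π j * Ind t j * max (w t j) 0
      else (π i * Ind t i) / ∑ j, π j * Ind t j)
    (hh : ∀ t, h t = ∑ i, Ind t i * p t i * ℓ t i)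
    (hg : ∀ t i, g t i = if 0 < w t i then h t - ℓ t i else max (h t - ℓ t i) 0)
    (hz : ∀ t i, z t i = Ind t i * g t i) :
    ∑ t ∈ Finset.Icc 1 T, ∑ i, Ind t i * u i * (h t - ℓ t i)
      ≤ Real.sqrt (2 * (∑ i, u i * S T i) *
          ((∑ i, u i * Real.log (u i / π i)) + (1 / 2) * Real.log T + 2)) := by
  have hround (t : ℕ) (ht : t ∈ Icc 1 T) :=
    round_gain_bounds hπ0 (hInd t) (hawake t (mem_Icc.1 ht).1 (mem_Icc.1 ht).2) (hℓ t)
      (hp t) (hh t) (hg t) (hz t)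
  have hexpert (i : Fin N) := wealth_pos_and_sq_sum_le (fun s => hInd s i)
    (fun s hs => (hround s hs).1 i)
    (ktPotential_le_wealth (w := (w · i)) (fun s => hInd s i) (fun s hs => (hround s hs).1 i)
      fun s => by rw [hw, hS])
  have hKL := Real.sum_mul_log_le_sum_mul_log_div hu0 hu1 hπ0 hsupp (fun i => (hexpert i).1)
    (sum_mul_one_add_sum_le_one hπ1 _ fun t ht => (hround t ht).2.2)
  have hS0 (i : Fin N) : 0 ≤ S T i :=
    hS T i ▸ sum_nonneg fun s _ => nonneg_of_eq_zero_or_eq_one (hInd s i)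
  calc ∑ t ∈ Icc 1 T, ∑ i, Ind t i * u i * (h t - ℓ t i)
      ≤ ∑ i, u i * ∑ t ∈ Icc 1 T, z t i := by
        rw [sum_comm]
        refine sum_le_sum fun i _ => ?_
        rw [mul_sum]
        refine sum_le_sum fun t ht => ?_
        rw [mul_comm (Ind t i), mul_assoc]
        exact mul_le_mul_of_nonneg_left ((hround t ht).2.1 i) (hu0 i)
    _ ≤ √((∑ i, u i * (2 * S T i)) * ∑ i, u i *
          (Real.log (1 + ∑ t ∈ Icc 1 T, z t i * w t i) + 1 / 2 * Real.log T + 2)) :=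
        Real.sum_mul_le_sqrt_mul_of_sq_le_mul hu0 (fun i => by linarith [hS0 i])
          (fun i => (hexpert i).2.1) fun i => hS T i ▸ (hexpert i).2.2
    _ = √(2 * (∑ i, u i * S T i) * (∑ i, u i *
          Real.log (1 + ∑ t ∈ Icc 1 T, z t i * w t i) + 1 / 2 * Real.log T + 2)) := by
        simp only [mul_add, sum_add_distrib, ← sum_mul, hu1, one_mul, mul_left_comm _ (2 : ℝ),
          ← mul_sum]
    _ ≤ _ := by
        have := sum_nonneg fun i (_ : i ∈ univ) => mul_nonneg (hu0 i) (hS0 i)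
        gcongr

/-- Corollary 1 (Regret of Sleeping CB with the Krichevsky–Trofimov potential, δ = 0):
with betting fractions `β_{t,i} = (∑_{s<t} z_{s,i}) / S_{t,i}` (and `0` when `S_{t,i} < 1`)
and betting amounts `w_{t,i} = β_{t,i} (1 + ∑_{s<t} z_{s,i} w_{s,i})`, the sleeping-experts
regret is bounded by `sqrt(2 (∑_i u_i S_{T,i}) (KL(u‖π) + (1/2) ln T + 2))`. -/
theorem sleeping_cb_kt_regret
    (N T : ℕ) (hT : 1 ≤ T)
    (π u : Fin N → ℝ)
    (hπ0 : ∀ i, 0 ≤ π i) (hπ1 : ∑ i, π i = 1)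
    (hu0 : ∀ i, 0 ≤ u i) (hu1 : ∑ i, u i = 1)
    (hsupp : ∀ i, 0 < u i → 0 < π i)
    (ℓ Ind w p g z S : ℕ → Fin N → ℝ) (h : ℕ → ℝ)
    (hℓ : ∀ t i, ℓ t i ∈ Set.Icc (0:ℝ) 1)
    (hInd : ∀ t i, Ind t i = 0 ∨ Ind t i = 1)
    (hawake : ∀ t, 1 ≤ t → t ≤ T → ∃ i, Ind t i = 1 ∧ 0 < π i)
    (hS : ∀ t i, S t i = ∑ s ∈ Finset.Icc 1 t, Ind s i)
    (hw : ∀ t i, w t i =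
      (if 1 ≤ S t i then (∑ s ∈ Finset.Icc 1 (t - 1), z s i) / S t i else 0) *
        (1 + ∑ s ∈ Finset.Icc 1 (t - 1), z s i * w s i))
    (hp : ∀ t i, p t i =
      if 0 < ∑ j, π j * Ind t j * max (w t j) 0
      then (π i * Ind t i * max (w t i) 0) / ∑ j, π j * Ind t j * max (w t j) 0
      else (π i * Ind t i) / ∑ j, π j * Ind t j)
    (hh : ∀ t, h t = ∑ i, Ind t i * p t i * ℓ t i)
    (hg : ∀ t i, g t i = if 0 < w t i then h t - ℓ t i else max (h t - ℓ t i) 0)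
    (hz : ∀ t i, z t i = Ind t i * g t i) :
    ∑ t ∈ Finset.Icc 1 T, ∑ i, Ind t i * u i * (h t - ℓ t i)
      ≤ Real.sqrt (2 * (∑ i, u i * S T i) *
          ((∑ i, u i * Real.log (u i / π i)) + (1 / 2) * Real.log T + 2)) :=
  sleeping_cb_kt_regret_general N T π u hπ0 hπ1 hu0 hu1 hsupp ℓ Ind w p g z S h hℓ hInd hawake hS hw
    hp hh hg hz
end

section
/- (SA-Regret implies m-shift regret) Let T ≥ 2 and m ≥ 0 be integers, c ≥ 0 a real number, W a nonempty set, and let ℓ_t ∈ ℝ and f_t : W → ℝ for t = 1,...,T. Suppose that for every interval [a..b] ⊆ [1..T] and every w ∈ W, ∑_{t=a}^{b} (ℓ_t − f_t(w)) ≤ c·sqrt((b − a + 1)·ln b). Then for every sequence w_1, ..., w_T in W with at most m switches (i.e., ∑_{j=1}^{T−1} 1{w_j ≠ w_{j+1}} ≤ m), it holds that ∑_{t=1}^{T} (ℓ_t − f_t(w_t)) ≤ c·sqrt((m+1)·T·ln T). -/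
/-!
Induction on the number of switches: the comparator is constant up to its first switch `j`, so
the block `[a, j]` costs at most `c √((j - a + 1) log T)` by the interval bound, and the rest
`[j + 1, T]` has one switch fewer. The two square roots recombine by Cauchy–Schwarz,
`√x + √(K y) ≤ √((K + 1)(x + y))`.
-/

open Finset

theorem Real.sqrt_add_sqrt_mul_le {x y K : ℝ} (hx : 0 ≤ x) (hy : 0 ≤ y) (hK : 0 ≤ K) :
    √x + √(K * y) ≤ √((K + 1) * (x + y)) := by
  -- Cauchy–Schwarz for `(1, √K) · (√x, √y)`; the cross term is AM-GM for `√(K x)`, `√y`.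
  have hcross : √x * √(K * y) = √(K * x) * √y := by
    rw [← Real.sqrt_mul hx, ← Real.sqrt_mul (mul_nonneg hK hx), mul_left_comm, mul_assoc]
  refine Real.le_sqrt_of_sq_le ?_
  nlinarith [Real.sq_sqrt hx, Real.sq_sqrt (mul_nonneg hK hy), Real.sq_sqrt (mul_nonneg hK hx),
    Real.sq_sqrt hy, two_mul_le_add_sq (√(K * x)) √y]

theorem Finset.sum_Icc_add_sum_Icc_succ {M : Type*} [AddCommMonoid M] (f : ℕ → M) {a j b : ℕ}
    (haj : a ≤ j + 1) (hjb : j ≤ b) :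
    ∑ t ∈ Icc a j, f t + ∑ t ∈ Icc (j + 1) b, f t = ∑ t ∈ Icc a b, f t := by
  simp only [← Ico_add_one_right_eq_Icc]
  exact sum_Ico_consecutive f haj (by omega)

section Switches

variable {W : Type*} [DecidableEq W]

def switches (w : ℕ → W) (a b : ℕ) : Finset ℕ := {j ∈ Ico a b | w j ≠ w (j + 1)}

theorem mem_switches {w : ℕ → W} {a b j : ℕ} :
    j ∈ switches w a b ↔ a ≤ j ∧ j < b ∧ w j ≠ w (j + 1) := by
  simp [switches, and_assoc]

theorem eq_of_switches_eq_empty {w : ℕ → W} {a b : ℕ} (h : switches w a b = ∅) :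
    ∀ t ∈ Icc a b, w t = w a := by
  intro t ht
  rw [mem_Icc] at ht
  induction t, ht.1 using Nat.le_induction with
  | base => rfl
  | succ t hat ih =>
    have hnot : t ∉ switches w a b := by simp [h]
    simp only [mem_switches, not_and, not_not] at hnot
    rw [← hnot hat (by omega), ih ⟨hat, by omega⟩]

theorem switches_eq_empty_of_forall_le {w : ℕ → W} {a b j : ℕ} (hjb : j ≤ b)
    (hmin : ∀ i ∈ switches w a b, j ≤ i) : switches w a j = ∅ := by
  refine eq_empty_of_forall_notMem fun i hi => ?_
  rw [mem_switches] at hi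
  have := hmin i (mem_switches.2 ⟨hi.1, by omega, hi.2.2⟩)
  omega

theorem card_switches_succ_lt {w : ℕ → W} {a b j : ℕ} (hj : j ∈ switches w a b) :
    #(switches w (j + 1) b) < #(switches w a b) := by
  rw [mem_switches] at hj
  refine card_lt_card ⟨fun i hi => ?_, fun hsub => ?_⟩
  · rw [mem_switches] at hi ⊢
    exact ⟨by omega, hi.2⟩
  · have := mem_switches.1 (hsub (mem_switches.2 hj))
    omega

theorem sum_Icc_le_of_switches_eq_empty {g : ℕ → W → ℝ} {B : ℝ} {w : ℕ → W} {a b : ℕ}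
    (hblock : ∀ v, ∑ t ∈ Icc a b, g t v ≤ B) (h : switches w a b = ∅) :
    ∑ t ∈ Icc a b, g t (w t) ≤ B := by
  rw [sum_congr rfl fun t ht => by rw [eq_of_switches_eq_empty h t ht]]
  exact hblock (w a)

theorem sum_Icc_le_of_card_switches_le {g : ℕ → W → ℝ} {c L : ℝ} (hc : 0 ≤ c)
    (hL : 0 ≤ L) {T : ℕ} (w : ℕ → W) (k : ℕ) {a : ℕ} (haT : a ≤ T)
    (hblock : ∀ a' b, a ≤ a' → a' ≤ b → b ≤ T → ∀ v,
      ∑ t ∈ Icc a' b, g t v ≤ c * √((b - a' + 1 : ℕ) * L))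
    (hk : #(switches w a T) ≤ k) :
    ∑ t ∈ Icc a T, g t (w t) ≤ c * √((k + 1) * (T - a + 1 : ℕ) * L) := by
  induction k generalizing a with
  | zero =>
    have hempty : switches w a T = ∅ := card_eq_zero.1 (by omega)
    simpa using sum_Icc_le_of_switches_eq_empty (hblock a T le_rfl haT le_rfl) hempty
  | succ k ih =>
    obtain hempty | hne := (switches w a T).eq_empty_or_nonempty
    · calc ∑ t ∈ Icc a T, g t (w t)
          ≤ c * √((T - a + 1 : ℕ) * L) :=
            sum_Icc_le_of_switches_eq_empty (hblock a T le_rfl haT le_rfl) hempty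
        _ ≤ c * √((↑(k + 1) + 1) * (T - a + 1 : ℕ) * L) := by
            gcongr
            exact le_mul_of_one_le_left (by positivity)
              (le_add_of_nonneg_left (Nat.cast_nonneg _))
    -- Peel off the first block `[a, j]`, on which `w` is constant, and recurse on `[j + 1, T]`.
    set j := (switches w a T).min' hne
    have hj : j ∈ switches w a T := min'_mem _ hne
    obtain ⟨haj, hjT, -⟩ := mem_switches.1 hj
    have hhead : ∑ t ∈ Icc a j, g t (w t) ≤ c * √((j - a + 1 : ℕ) * L) :=
      sum_Icc_le_of_switches_eq_empty (hblock a j le_rfl haj hjT.le)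
        (switches_eq_empty_of_forall_le hjT.le fun i hi => min'_le _ i hi)
    have htail := ih (a := j + 1) (by omega) (fun a' b h => hblock a' b (by omega))
      (by have := card_switches_succ_lt hj; omega)
    rw [← sum_Icc_add_sum_Icc_succ _ (by omega) hjT.le]
    calc ∑ t ∈ Icc a j, g t (w t) + ∑ t ∈ Icc (j + 1) T, g t (w t)
        ≤ c * √((j - a + 1 : ℕ) * L) + c * √((k + 1) * (T - (j + 1) + 1 : ℕ) * L) :=
          add_le_add hhead htail
      _ ≤ c * √((k + 1 + 1) * ((j - a + 1 : ℕ) * L + (T - (j + 1) + 1 : ℕ) * L)) := by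
          rw [← mul_add, mul_assoc ((k : ℝ) + 1)]
          gcongr
          exact Real.sqrt_add_sqrt_mul_le (by positivity) (by positivity) (by positivity)
      _ = c * √((↑(k + 1) + 1) * (T - a + 1 : ℕ) * L) := by
          rw [← add_mul, ← Nat.cast_add,
            show j - a + 1 + (T - (j + 1) + 1) = T - a + 1 by omega]
          push_cast
          ring_nf

end Switches

theorem sa_regret_implies_m_shift_regret_general
    (T m : ℕ) (hT : 2 ≤ T) (c : ℝ) (hc : 0 ≤ c)
    (W : Type*)
    (ℓ : ℕ → ℝ) (f : ℕ → W → ℝ)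
    (hSA : ∀ a b : ℕ, 1 ≤ a → a ≤ b → b ≤ T → ∀ w : W,
      ∑ t ∈ Finset.Icc a b, (ℓ t - f t w)
        ≤ c * Real.sqrt (((b - a + 1 : ℕ) : ℝ) * Real.log (b : ℝ))) :
    ∀ w : ℕ → W, {j : ℕ | 1 ≤ j ∧ j ≤ T - 1 ∧ w j ≠ w (j + 1)}.ncard ≤ m →
      ∑ t ∈ Finset.Icc 1 T, (ℓ t - f t (w t))
        ≤ c * Real.sqrt (((m : ℝ) + 1) * (T : ℝ) * Real.log (T : ℝ)) := by
  classical
  intro w hw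
  have hswitches : {j : ℕ | 1 ≤ j ∧ j ≤ T - 1 ∧ w j ≠ w (j + 1)} = switches w 1 T := by
    ext j
    simp only [Set.mem_ofPred_eq, mem_coe, mem_switches]
    exact and_congr_right fun _ => and_congr_left' (by omega)
  have hblock : ∀ a b, 1 ≤ a → a ≤ b → b ≤ T → ∀ v,
      ∑ t ∈ Icc a b, (ℓ t - f t v) ≤ c * √((b - a + 1 : ℕ) * Real.log T) := by
    intro a b ha hab hbT v
    refine (hSA a b ha hab hbT v).trans ?_
    gcongr
    exact Nat.cast_pos.2 (by omega)
  have := sum_Icc_le_of_card_switches_le hc (Real.log_natCast_nonneg T) w m (by omega) hblock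
    (by rwa [hswitches, Set.ncard_coe_finset] at hw)
  rwa [show T - 1 + 1 = T by omega] at this

/-- SA-Regret implies m-shift regret: if on every interval `[a..b] ⊆ [1..T]` and every
comparator `w` the regret is at most `c·sqrt((b−a+1)·ln b)`, then against any comparator
sequence with at most `m` switches the regret is at most `c·sqrt((m+1)·T·ln T)`. -/
theorem sa_regret_implies_m_shift_regret
    (T m : ℕ) (hT : 2 ≤ T) (c : ℝ) (hc : 0 ≤ c)
    (W : Type*) [Nonempty W]
    (ℓ : ℕ → ℝ) (f : ℕ → W → ℝ)
    (hSA : ∀ a b : ℕ, 1 ≤ a → a ≤ b → b ≤ T → ∀ w : W,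
      ∑ t ∈ Finset.Icc a b, (ℓ t - f t w)
        ≤ c * Real.sqrt (((b - a + 1 : ℕ) : ℝ) * Real.log (b : ℝ))) :
    ∀ w : ℕ → W, {j : ℕ | 1 ≤ j ∧ j ≤ T - 1 ∧ w j ≠ w (j + 1)}.ncard ≤ m →
      ∑ t ∈ Finset.Icc 1 T, (ℓ t - f t (w t))
        ≤ c * Real.sqrt (((m : ℝ) + 1) * (T : ℝ) * Real.log (T : ℝ)) :=
  sa_regret_implies_m_shift_regret_general T m hT c hc W ℓ f hSA
end

section
/- In the Sleeping CB setup, at every time step t it holds that ∑_{i=1}^N π_i · I_{t,i} · g_{t,i} · w_{t,i} ≤ 0. -/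
open Finset

/-- In the Sleeping CB setup, at every time step the prior-weighted sum of
`I_{t,i} · g_{t,i} · w_{t,i}` over the experts is nonpositive. -/
theorem sleeping_cb_key_nonpositive
    (N : ℕ) (π ℓ Ind w p : Fin N → ℝ) (h : ℝ)
    (hπ0 : ∀ i, 0 ≤ π i) (hπ1 : ∑ i, π i = 1)
    (hℓ : ∀ i, ℓ i ∈ Set.Icc (0:ℝ) 1)
    (hInd : ∀ i, Ind i = 0 ∨ Ind i = 1)
    (hp0 : ∀ i, 0 ≤ p i) (hp1 : ∑ i, p i = 1)
    (hpsupp : ∀ i, Ind i = 0 → p i = 0)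
    (hpdef : 0 < ∑ j, π j * Ind j * max (w j) 0 →
      ∀ i, p i = (π i * Ind i * max (w i) 0) / ∑ j, π j * Ind j * max (w j) 0)
    (hh : h = ∑ i, Ind i * p i * ℓ i) :
    ∑ i, π i * Ind i * (if 0 < w i then h - ℓ i else max (h - ℓ i) 0) * w i ≤ 0 := by
  set S := ∑ j, π j * Ind j * max (w j) 0 with hS
  have hInd0 : ∀ i, (0:ℝ) ≤ Ind i := by
    intro i; rcases hInd i with h' | h' <;> simp [h']
  have hterm0 : ∀ i : Fin N, 0 ≤ π i * Ind i * max (w i) 0 := fun i =>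
    mul_nonneg (mul_nonneg (hπ0 i) (hInd0 i)) (le_max_right _ _)
  have hS0 : 0 ≤ S := Finset.sum_nonneg fun i _ => hterm0 i
  have hIndp : ∀ i, p i = Ind i * p i := by
    intro i
    rcases hInd i with h' | h'
    · simp [h', hpsupp i h']
    · simp [h']
  have hhp : h = ∑ i, p i * ℓ i := by
    rw [hh]; apply Finset.sum_congr rfl; intro i _; rw [← hIndp i]
  rcases eq_or_lt_of_le hS0 with hSe | hSpos
  · -- S = 0 case: each π i * Ind i * max (w i) 0 = 0
    have hzero : ∀ i ∈ Finset.univ, π i * Ind i * max (w i) 0 = 0 := by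
      rw [← Finset.sum_eq_zero_iff_of_nonneg (fun i _ => hterm0 i)]
      exact hSe.symm
    apply Finset.sum_nonpos
    intro i _
    by_cases hw : 0 < w i
    · have hz := hzero i (Finset.mem_univ i)
      rw [max_eq_left hw.le] at hz
      simp only [if_pos hw]
      have : π i * Ind i * (h - ℓ i) * w i = (h - ℓ i) * (π i * Ind i * w i) := by ring
      rw [this, hz, mul_zero]
    · simp only [if_neg hw]
      push_neg at hw
      have h1 : 0 ≤ π i * Ind i * max (h - ℓ i) 0 :=
        mul_nonneg (mul_nonneg (hπ0 i) (hInd0 i)) (le_max_right _ _)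
      exact mul_nonpos_of_nonneg_of_nonpos h1 hw
  · have hp := hpdef hSpos
    have key : ∀ i : Fin N,
        π i * Ind i * (if 0 < w i then h - ℓ i else max (h - ℓ i) 0) * w i
          ≤ S * (p i * (h - ℓ i)) := by
      intro i
      by_cases hw : 0 < w i
      · have : S * p i = π i * Ind i * w i := by
          rw [hp i, max_eq_left hw.le]
          field_simp
        simp only [if_pos hw]
        refine le_of_eq ?_
        linear_combination (ℓ i - h) * this
      · have hpz : p i = 0 := by
          rw [hp i]
          push_neg at hw
          rw [max_eq_right hw]
          simp
        rw [hpz]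
        simp only [if_neg hw, zero_mul, mul_zero]
        push_neg at hw
        have h1 : 0 ≤ π i * Ind i * max (h - ℓ i) 0 :=
          mul_nonneg (mul_nonneg (hπ0 i) (hInd0 i)) (le_max_right _ _)
        exact mul_nonpos_of_nonneg_of_nonpos h1 hw
    have hzero : ∑ i, p i * (h - ℓ i) = 0 := by
      calc ∑ i, p i * (h - ℓ i) = ∑ i, (p i * h - p i * ℓ i) := by
            apply Finset.sum_congr rfl; intro i _; ring
        _ = (∑ i, p i) * h - ∑ i, p i * ℓ i := by
            rw [Finset.sum_sub_distrib, Finset.sum_mul]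
        _ = 0 := by rw [hp1, ← hhp]; ring
    calc ∑ i, π i * Ind i * (if 0 < w i then h - ℓ i else max (h - ℓ i) 0) * w i
        ≤ ∑ i, S * (p i * (h - ℓ i)) := Finset.sum_le_sum fun i _ => key i
      _ = 0 := by rw [← Finset.mul_sum, hzero, mul_zero]
end
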